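/- Let f : ℝ^{n×n} → ℝ be continuous on the set of positive semidefinite matrices, and consider the problem min f(Z) over PSD matrices Z with rank(Z) ≤ r, together with the factorized problem min f(S Sᵀ) over S ∈ ℝ^{n×r}. If Z̄ = S̄ S̄ᵀ with S̄ ∈ ℝ^{n×r}, then Z̄ is a local minimizer of the rank-constrained problem if and only if S̄ is a local minimizer of the factorized problem. -/

import Mathlib

open Matrix

noncomputable def nuclearNorm {n m : ℕ} (X : Matrix (Fin n) (Fin m) ℝ) : ℝ :=
  ∑ i, Real.sqrt ((show (Xᵀ * X).IsHermitian by simpa using Matrix.isHermitian_conjTranspose_mul_self X).eigenvalues i)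

noncomputable def frob {n m : ℕ} (X : Matrix (Fin n) (Fin m) ℝ) : ℝ :=
  Real.sqrt (∑ i, ∑ j, (X i j)^2)

/-!
A PSD matrix of rank at most `r` is `T Tᴴ` for some `n × r` matrix `T`, and two such factors of
the same matrix differ by a unitary `r × r` matrix. The factors of matrices near `S̄ S̄ᴴ` form a
bounded set; those none of whose unitary rotations is close to `S̄` form a compact set, whose
image under `S ↦ S Sᴴ` is closed and misses `S̄ S̄ᴴ`. Hence `S ↦ S Sᴴ` maps the neighbourhood
filter of `S̄` onto that of `S̄ S̄ᴴ` within the rank-constrained PSD cone, and local minimality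
of `S̄` and of `S̄ S̄ᴴ` are the same statement about this filter.
-/

open scoped ComplexOrder InnerProductSpace Topology
open Filter

section LinearIsometry

variable {𝕜 E F : Type*} [RCLike 𝕜]

theorem nonempty_linearIsometry_of_finrank_le [NormedAddCommGroup E] [InnerProductSpace 𝕜 E]
    [FiniteDimensional 𝕜 E] [NormedAddCommGroup F] [InnerProductSpace 𝕜 F] [FiniteDimensional 𝕜 F]
    (h : Module.finrank 𝕜 E ≤ Module.finrank 𝕜 F) : Nonempty (E →ₗᵢ[𝕜] F) := by
  let b := stdOrthonormalBasis 𝕜 E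
  let c := stdOrthonormalBasis 𝕜 F
  let f := b.toBasis.constr 𝕜 (c ∘ Fin.castLE h)
  have hf : ⇑f ∘ ⇑b.toBasis = c ∘ Fin.castLE h := funext (b.toBasis.constr_basis 𝕜 _)
  exact ⟨f.isometryOfOrthonormal (by simp [b.orthonormal])
    (hf ▸ c.orthonormal.comp _ (Fin.castLE_injective h))⟩

theorem LinearMap.exists_linearIsometry_comp_eq_of_norm_eq [AddCommGroup E] [Module 𝕜 E]
    [NormedAddCommGroup F] [InnerProductSpace 𝕜 F] [FiniteDimensional 𝕜 F]
    {a b : E →ₗ[𝕜] F} (h : ∀ x, ‖a x‖ = ‖b x‖) : ∃ L : F →ₗᵢ[𝕜] F, L.toLinearMap ∘ₗ a = b := by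
  -- `a x ↦ b x` is well defined on `range a` since `ker a = ker b`; it is isometric there.
  obtain ⟨g, hg⟩ := a.rangeRestrict.exists_rightInverse_of_surjective a.range_rangeRestrict
  have hag : ∀ v, a (g v) = v := fun v => congr_arg Subtype.val (LinearMap.congr_fun hg v)
  have hbg : ∀ x, b (g (a.rangeRestrict x)) = b x := fun x => by
    rw [← sub_eq_zero, ← map_sub, ← norm_eq_zero, ← h, map_sub, hag]
    simp
  let φ : LinearMap.range a →ₗᵢ[𝕜] F := ⟨b ∘ₗ g, fun v => by simp [← h, hag]⟩
  refine ⟨φ.extend, LinearMap.ext fun x => ?_⟩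
  change φ.extend (a.rangeRestrict x) = b x
  rw [LinearIsometry.extend_apply]
  exact hbg x

end LinearIsometry

namespace Matrix

theorem finrank_range_toEuclideanLin {𝕜 m n : Type*} [RCLike 𝕜] [Fintype m] [DecidableEq m]
    [Fintype n] (A : Matrix n m 𝕜) :
    Module.finrank 𝕜 (LinearMap.range A.toEuclideanLin) = A.rank := by
  rw [toEuclideanLin_eq_toLin_orthonormal, ← rank_eq_finrank_range_toLin]

variable {𝕜 m n p : Type*} [RCLike 𝕜] [Fintype m] [DecidableEq m] [Fintype n] [DecidableEq n]
  [Fintype p] [DecidableEq p]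

theorem inner_toEuclideanLin_toEuclideanLin (A : Matrix p m 𝕜) (x y : EuclideanSpace 𝕜 m) :
    ⟪A.toEuclideanLin x, A.toEuclideanLin y⟫_𝕜 = ⟪x, (Aᴴ * A).toEuclideanLin y⟫_𝕜 := by
  rw [toLpLin_mul, toEuclideanLin_conjTranspose_eq_adjoint, LinearMap.comp_apply,
    LinearMap.adjoint_inner_right]

theorem conjTranspose_mul_self_eq_iff {A : Matrix n m 𝕜} {B : Matrix p m 𝕜} :
    Aᴴ * A = Bᴴ * B ↔ ∀ x y,
      ⟪A.toEuclideanLin x, A.toEuclideanLin y⟫_𝕜 = ⟪B.toEuclideanLin x, B.toEuclideanLin y⟫_𝕜 := by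
  simp_rw [inner_toEuclideanLin_toEuclideanLin]
  refine ⟨fun h x y => by rw [h], fun h => toEuclideanLin.injective ?_⟩
  exact LinearMap.ext fun y => ext_inner_left 𝕜 fun x => h x y

theorem PosSemidef.exists_mul_conjTranspose_eq {Z : Matrix n n 𝕜} (hZ : Z.PosSemidef)
    (hr : Z.rank ≤ Fintype.card m) : ∃ T : Matrix n m 𝕜, T * Tᴴ = Z := by
  obtain ⟨B, rfl⟩ : ∃ B : Matrix n n 𝕜, Z = Bᴴ * B := by
    open scoped MatrixOrder in
    exact CStarAlgebra.nonneg_iff_eq_star_mul_self.mp hZ.nonneg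
  obtain ⟨ι⟩ := nonempty_linearIsometry_of_finrank_le (𝕜 := 𝕜)
    (E := LinearMap.range B.toEuclideanLin) (F := EuclideanSpace 𝕜 m) <| by
    rwa [finrank_range_toEuclideanLin, finrank_euclideanSpace, ← rank_conjTranspose_mul_self]
  let M := toEuclideanLin.symm (ι.toLinearMap ∘ₗ B.toEuclideanLin.rangeRestrict)
  refine ⟨Mᴴ, ?_⟩
  rw [conjTranspose_conjTranspose, conjTranspose_mul_self_eq_iff]
  intro x y
  simp [M, ι.inner_map_map]

theorem exists_mem_unitaryGroup_of_mul_conjTranspose_eq {T S : Matrix n m 𝕜}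
    (h : T * Tᴴ = S * Sᴴ) : ∃ U ∈ unitaryGroup m 𝕜, S = T * U := by
  have hinner := (conjTranspose_mul_self_eq_iff (A := Tᴴ) (B := Sᴴ)).mp (by simpa using h)
  obtain ⟨L, hL⟩ := LinearMap.exists_linearIsometry_comp_eq_of_norm_eq
    (a := Tᴴ.toEuclideanLin) (b := Sᴴ.toEuclideanLin) fun x => by
      rw [norm_eq_sqrt_re_inner (𝕜 := 𝕜), hinner, ← norm_eq_sqrt_re_inner]
  let M := toEuclideanLin.symm L.toLinearMap
  have hM : M.toEuclideanLin = L.toLinearMap := toEuclideanLin.apply_symm_apply _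
  refine ⟨Mᴴ, ?_, ?_⟩
  · have hMM : Mᴴ * M = (1 : Matrix m m 𝕜)ᴴ * 1 :=
      conjTranspose_mul_self_eq_iff.mpr fun x y => by simp [hM]
    rw [← star_eq_conjTranspose, Unitary.star_mem_iff, mem_unitaryGroup_iff',
      star_eq_conjTranspose]
    simpa using hMM
  · rw [← conjTranspose_conjTranspose S, ← conjTranspose_conjTranspose T, ← conjTranspose_mul]
    congr 1
    apply toEuclideanLin.injective
    rw [toLpLin_mul, hM, hL]

end Matrix

attribute [local instance] Matrix.frobeniusNormedAddCommGroup Matrix.frobeniusNormedSpace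

namespace Matrix

variable {𝕜 m n : Type*} [RCLike 𝕜] [Fintype m] [Fintype n]

theorem frobenius_norm_sq_eq_re_trace (T : Matrix n m 𝕜) : ‖T‖ ^ 2 = RCLike.re (T * Tᴴ).trace := by
  rw [frobenius_norm_def, ← Real.rpow_natCast, ← Real.rpow_mul (by positivity)]
  simp [trace, mul_apply, RCLike.mul_conj]

theorem isBounded_setOf_mul_conjTranspose_mem {s : Set (Matrix n n 𝕜)}
    (hs : Bornology.IsBounded s) : Bornology.IsBounded {T : Matrix n m 𝕜 | T * Tᴴ ∈ s} := by
  obtain ⟨C, hC⟩ := hs.isCompact_closure.exists_bound_of_continuousOn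
    (f := fun Z => RCLike.re Z.trace) (by fun_prop)
  refine isBounded_iff_forall_norm_le.mpr ⟨√C, fun T hT => Real.le_sqrt_of_sq_le ?_⟩
  rw [frobenius_norm_sq_eq_re_trace]
  exact (le_abs_self _).trans (hC _ (subset_closure hT))

variable [DecidableEq m] [DecidableEq n]

theorem nhdsWithin_le_map_mul_conjTranspose (S₀ : Matrix n m 𝕜) :
    𝓝[{Z | Z.PosSemidef ∧ Z.rank ≤ Fintype.card m}] (S₀ * S₀ᴴ) ≤
      Filter.map (fun S => S * Sᴴ) (𝓝 S₀) := by
  refine le_map fun V hV => ?_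
  set K := {T : Matrix n m 𝕜 | T * Tᴴ ∈ Metric.closedBall (S₀ * S₀ᴴ) 1} ∩
    ⋂ U ∈ unitaryGroup m 𝕜, (· * U) ⁻¹' (interior V)ᶜ
  have hK : IsCompact K := by
    refine Metric.isCompact_of_isClosed_isBounded ?_
      ((isBounded_setOf_mul_conjTranspose_mem Metric.isBounded_closedBall).subset
        Set.inter_subset_left)
    refine (Metric.isClosed_closedBall.preimage (by fun_prop)).inter
      (isClosed_biInter fun U _ => isOpen_interior.isClosed_compl.preimage (by fun_prop))
  have hS₀ : S₀ * S₀ᴴ ∉ (fun T => T * Tᴴ) '' K := by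
    rintro ⟨T, ⟨-, hT⟩, hTS⟩
    obtain ⟨U, hU, rfl⟩ := exists_mem_unitaryGroup_of_mul_conjTranspose_eq hTS
    exact Set.mem_iInter₂.mp hT U hU (mem_interior_iff_mem_nhds.mpr hV)
  filter_upwards [nhdsWithin_le_nhds <| (hK.image (by fun_prop)).isClosed.isOpen_compl.mem_nhds hS₀,
    nhdsWithin_le_nhds <| Metric.closedBall_mem_nhds _ one_pos, self_mem_nhdsWithin]
    with Z hZK hZ1 ⟨hZ, hr⟩
  obtain ⟨T, rfl⟩ := hZ.exists_mul_conjTranspose_eq hr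
  obtain ⟨U, hU, hTU⟩ : ∃ U ∈ unitaryGroup m 𝕜, T * U ∈ interior V := by
    by_contra! h
    exact hZK ⟨T, ⟨hZ1, Set.mem_iInter₂.mpr h⟩, rfl⟩
  refine ⟨T * U, interior_subset hTU, ?_⟩
  show T * U * (T * U)ᴴ = T * Tᴴ
  rw [conjTranspose_mul, Matrix.mul_assoc, ← Matrix.mul_assoc U, ← star_eq_conjTranspose,
    mem_unitaryGroup_iff.mp hU, Matrix.one_mul]

theorem map_mul_conjTranspose_nhds (S₀ : Matrix n m 𝕜) :
    Filter.map (fun S => S * Sᴴ) (𝓝 S₀) =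
      𝓝[{Z | Z.PosSemidef ∧ Z.rank ≤ Fintype.card m}] (S₀ * S₀ᴴ) := by
  refine le_antisymm (tendsto_nhdsWithin_iff.mpr ⟨?_, Eventually.of_forall fun S => ?_⟩)
    (nhdsWithin_le_map_mul_conjTranspose S₀)
  · exact (by fun_prop : Continuous fun S : Matrix n m 𝕜 => S * Sᴴ).tendsto S₀
  · exact ⟨posSemidef_self_mul_conjTranspose S, (rank_mul_le_left _ _).trans (rank_le_card_width S)⟩

end Matrix

theorem frob_eq_norm {n m : ℕ} (X : Matrix (Fin n) (Fin m) ℝ) : frob X = ‖X‖ := by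
  simp [frob, frobenius_norm_def, Real.sqrt_eq_rpow]

theorem stmt_6_general {n r : ℕ} (f : Matrix (Fin n) (Fin n) ℝ → ℝ)
    (Sbar : Matrix (Fin n) (Fin r) ℝ) (Zbar : Matrix (Fin n) (Fin n) ℝ)
    (hZbar : Zbar = Sbar * Sbarᵀ) :
    (∃ ε > (0:ℝ), ∀ Z : Matrix (Fin n) (Fin n) ℝ,
        Z.PosSemidef → Z.rank ≤ r → frob (Z - Zbar) < ε → f Zbar ≤ f Z) ↔
    (∃ ε > (0:ℝ), ∀ S : Matrix (Fin n) (Fin r) ℝ,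
        frob (S - Sbar) < ε → f (Sbar * Sbarᵀ) ≤ f (S * Sᵀ)) := by
  have hmap := map_mul_conjTranspose_nhds Sbar
  simp only [conjTranspose_eq_transpose_of_trivial, Fintype.card_fin, ← hZbar] at hmap
  calc _ ↔ ∀ᶠ Z in 𝓝[{Z | Z.PosSemidef ∧ Z.rank ≤ r}] Zbar, f Zbar ≤ f Z := by
        rw [eventually_nhdsWithin_iff]
        refine Iff.trans ?_ Metric.eventually_nhds_iff.symm
        simp only [frob_eq_norm, dist_eq_norm, Set.mem_ofPred_eq, and_imp]
        exact exists_congr fun ε => and_congr_right fun _ => forall_congr' fun Z => by tauto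
    _ ↔ ∀ᶠ S in 𝓝 Sbar, f Zbar ≤ f (S * Sᵀ) := by rw [← hmap]; rfl
    _ ↔ _ := Metric.eventually_nhds_iff.trans (by simp only [frob_eq_norm, dist_eq_norm, hZbar])

theorem stmt_6 {n r : ℕ} (f : Matrix (Fin n) (Fin n) ℝ → ℝ)
    (hf : ContinuousOn f {Z : Matrix (Fin n) (Fin n) ℝ | Z.PosSemidef})
    (Sbar : Matrix (Fin n) (Fin r) ℝ) (Zbar : Matrix (Fin n) (Fin n) ℝ)
    (hZbar : Zbar = Sbar * Sbarᵀ) :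
    (∃ ε > (0:ℝ), ∀ Z : Matrix (Fin n) (Fin n) ℝ,
        Z.PosSemidef → Z.rank ≤ r → frob (Z - Zbar) < ε → f Zbar ≤ f Z) ↔
    (∃ ε > (0:ℝ), ∀ S : Matrix (Fin n) (Fin r) ℝ,
        frob (S - Sbar) < ε → f (Sbar * Sbarᵀ) ≤ f (S * Sᵀ)) :=
  stmt_6_general f Sbar Zbar hZbar
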